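/- arXiv:2308.02293 — 2 statements merged into one kernel-verified Lean document; each statement's English description precedes it below -/
import Mathlib

section
/- For any vector r ∈ ℝⁿ and any 1 ≤ h ≤ n, the minimum over ξ ∈ ℝⁿ of (1/n)‖r − ξ‖₂² + T_h(ξ) equals (1/2)T_h(r), where T_h(ξ) = (1/n)·(sum of the h smallest values among ξ₁², ..., ξₙ²). -/
/-!
For reals `a, b` one has `a² / 2 ≤ (a - b)² + b²`, with equality exactly at `b = a / 2`.
Summing this over an index set `J` on which `ξ` attains its trimmed sum bounds the
objective below by half the sum of `r²` over `J`, hence by half the trimmed sum of `r`.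
Halving `r` on an index set where `r` attains its trimmed sum, and keeping it elsewhere,
achieves the bound.
-/

open Finset

/-- The h-trimmed squared loss: (1/n) times the sum of the h smallest squared entries,
expressed as the infimum over index sets of cardinality h. -/
noncomputable def trimmedLoss (n h : ℕ) (ξ : Fin n → ℝ) : ℝ :=
  (1 / (n : ℝ)) *
    sInf ((fun I : Finset (Fin n) => ∑ i ∈ I, (ξ i) ^ 2) '' {I | I.card = h})

noncomputable def minSqSum {ι : Type*} (𝒮 : Set (Finset ι)) (ξ : ι → ℝ) : ℝ :=
  sInf ((fun I : Finset ι => ∑ i ∈ I, ξ i ^ 2) '' 𝒮)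

lemma half_sq_le_sq_sub_add_sq (a b : ℝ) : a ^ 2 / 2 ≤ (a - b) ^ 2 + b ^ 2 := by
  nlinarith [sq_nonneg (a - 2 * b)]

namespace minSqSum

variable {ι : Type*} [Fintype ι] {𝒮 : Set (Finset ι)}

lemma le_sum {I : Finset ι} (hI : I ∈ 𝒮) (ξ : ι → ℝ) :
    minSqSum 𝒮 ξ ≤ ∑ i ∈ I, ξ i ^ 2 :=
  csInf_le (Set.toFinite _).bddBelow (Set.mem_image_of_mem _ hI)

lemma exists_eq_sum (h𝒮 : 𝒮.Nonempty) (ξ : ι → ℝ) :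
    ∃ I ∈ 𝒮, ∑ i ∈ I, ξ i ^ 2 = minSqSum 𝒮 ξ :=
  (h𝒮.image _).csInf_mem (Set.toFinite _)

lemma half_le_sum_sq_sub_add (h𝒮 : 𝒮.Nonempty) (r ξ : ι → ℝ) :
    minSqSum 𝒮 r / 2 ≤ ∑ i, (r i - ξ i) ^ 2 + minSqSum 𝒮 ξ := by
  obtain ⟨J, hJ, hJξ⟩ := exists_eq_sum h𝒮 ξ
  calc minSqSum 𝒮 r / 2
      ≤ ∑ i ∈ J, r i ^ 2 / 2 := by
          rw [← sum_div]; exact div_le_div_of_nonneg_right (le_sum hJ r) zero_le_two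
    _ ≤ ∑ i ∈ J, ((r i - ξ i) ^ 2 + ξ i ^ 2) :=
        sum_le_sum fun i _ => half_sq_le_sq_sub_add_sq (r i) (ξ i)
    _ ≤ ∑ i, (r i - ξ i) ^ 2 + minSqSum 𝒮 ξ := by
        rw [sum_add_distrib, hJξ]
        gcongr ?_ + _
        exact sum_le_univ_sum_of_nonneg fun i => sq_nonneg _

lemma sum_sq_sub_add_piecewise_half_le [DecidableEq ι] {r : ι → ℝ} {I₀ : Finset ι}
    (hI₀ : I₀ ∈ 𝒮) (hr : ∑ i ∈ I₀, r i ^ 2 = minSqSum 𝒮 r) :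
    ∑ i, (r i - I₀.piecewise (r / 2) r i) ^ 2 + minSqSum 𝒮 (I₀.piecewise (r / 2) r)
      ≤ minSqSum 𝒮 r / 2 := by
  set ξ₀ := I₀.piecewise (r / 2) r
  have hξ₀ : ∀ i ∈ I₀, ξ₀ i = r i / 2 := fun i hi => by simp [ξ₀, piecewise_eq_of_mem _ _ _ hi]
  have hdist : ∑ i, (r i - ξ₀ i) ^ 2 = minSqSum 𝒮 r / 4 := by
    rw [← sum_subset (subset_univ I₀) fun i _ hi => by simp [ξ₀, piecewise_eq_of_notMem _ _ _ hi],
      ← hr, sum_div]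
    exact sum_congr rfl fun i hi => by rw [hξ₀ i hi]; ring
  have hhalf : ∑ i ∈ I₀, ξ₀ i ^ 2 = minSqSum 𝒮 r / 4 := by
    rw [← hr, sum_div]
    exact sum_congr rfl fun i hi => by rw [hξ₀ i hi]; ring
  linarith [le_sum hI₀ ξ₀]

theorem isLeast_sum_sq_sub_add (h𝒮 : 𝒮.Nonempty) (r : ι → ℝ) :
    IsLeast (Set.range fun ξ => ∑ i, (r i - ξ i) ^ 2 + minSqSum 𝒮 ξ) (minSqSum 𝒮 r / 2) := by
  classical
  obtain ⟨I₀, hI₀, hr⟩ := exists_eq_sum h𝒮 r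
  refine ⟨⟨I₀.piecewise (r / 2) r,
    le_antisymm (sum_sq_sub_add_piecewise_half_le hI₀ hr) (half_le_sum_sq_sub_add h𝒮 r _)⟩, ?_⟩
  rintro _ ⟨ξ, rfl⟩
  exact half_le_sum_sq_sub_add h𝒮 r ξ

end minSqSum

lemma trimmedLoss_eq_mul_minSqSum (n h : ℕ) (ξ : Fin n → ℝ) :
    trimmedLoss n h ξ = 1 / n * minSqSum {I | I.card = h} ξ :=
  rfl

theorem ttl_identity_general (n h : ℕ) (hhn : h ≤ n)
    (r : Fin n → ℝ) :
    IsLeast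
      (Set.range fun ξ : Fin n → ℝ =>
        (1 / (n : ℝ)) * ∑ i, (r i - ξ i) ^ 2 + trimmedLoss n h ξ)
      ((1 / 2) * trimmedLoss n h r) := by
  have hne : {I : Finset (Fin n) | I.card = h}.Nonempty :=
    exists_subset_card_eq (s := univ) (by simpa using hhn) |>.imp fun _ hI => hI.2
  have key := (monotone_mul_left_of_nonneg (by positivity : (0 : ℝ) ≤ 1 / n)).map_isLeast
    (minSqSum.isLeast_sum_sq_sub_add hne r)
  rw [← Set.range_comp] at key
  simp only [trimmedLoss_eq_mul_minSqSum, ← mul_add]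
  rwa [mul_left_comm, one_div_mul_eq_div (2 : ℝ)]

theorem ttl_identity (n h : ℕ) (hn : 0 < n) (hh1 : 1 ≤ h) (hhn : h ≤ n)
    (r : Fin n → ℝ) :
    IsLeast
      (Set.range fun ξ : Fin n → ℝ =>
        (1 / (n : ℝ)) * ∑ i, (r i - ξ i) ^ 2 + trimmedLoss n h ξ)
      ((1 / 2) * trimmedLoss n h r) :=
  ttl_identity_general n h hhn r
end

section
/- Let Z = {(xᵢ,yᵢ)}_{i=1}^n be a dataset, let f_θ be a family of models, C ≥ 0 a regularizer on models with C(f_θ) well-defined, λ > 0, and define the objective L_Z̃(θ) = (1/2)T_h(r_Z̃(θ)) + λ C(f_θ) for a dataset Z̃, where r_Z̃(θ) is the residual vector and T_h the h-trimmed loss. Fix θ₀ and set M₀ = (1/(2n))∑_{i=1}^n (yᵢ − f_{θ₀}(xᵢ))² + λC(f_{θ₀}). Then for any contaminated dataset Z̃ obtained by replacing at most m ≤ n − h samples of Z with arbitrary values, any minimizer θ̂ of L_Z̃ satisfies C(f_{θ̂}) ≤ M₀/λ. In particular, the supremum of C(f_{θ̂(Z̃)}) over all such contaminations with m ≤ n−h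 is finite, so the functional breakdown point of the minimizer is at least (n−h+1)/n. -/
/-!
Compare the minimizer with the fixed parameter `θ₀`. At most `n - h` samples were replaced,
so at least `h` samples are clean; the trimmed loss at `θ₀` is at most the normalized sum over
`h` of those, hence at most the clean full sum of squares. Since the trimmed loss at `θ̂` is
nonnegative, minimality gives `λ C(θ̂) ≤ L(θ̂) ≤ L(θ₀) ≤ M₀`.
-/

open Finset

lemma trimmedLoss_nonneg (n h : ℕ) (ξ : Fin n → ℝ) : 0 ≤ trimmedLoss n h ξ := by
  refine mul_nonneg (by positivity) (Real.sInf_nonneg ?_)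
  rintro r ⟨I, -, rfl⟩
  exact sum_nonneg fun i _ => sq_nonneg _

lemma trimmedLoss_le_sum (n h : ℕ) (ξ : Fin n → ℝ) (I : Finset (Fin n)) (hI : I.card = h) :
    trimmedLoss n h ξ ≤ (1 / (n : ℝ)) * ∑ i ∈ I, ξ i ^ 2 := by
  refine mul_le_mul_of_nonneg_left (csInf_le ?_ ⟨I, hI, rfl⟩) (by positivity)
  refine ⟨0, ?_⟩
  rintro r ⟨J, -, rfl⟩
  exact sum_nonneg fun i _ => sq_nonneg _

lemma trimmedLoss_le_sum_of_eqOn (n h : ℕ) (ξ η : Fin n → ℝ) (S : Finset (Fin n))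
    (hS : h ≤ S.card) (hξη : ∀ i ∈ S, ξ i = η i) :
    trimmedLoss n h ξ ≤ (1 / (n : ℝ)) * ∑ i, η i ^ 2 := by
  obtain ⟨I, hIS, hI⟩ := exists_subset_card_eq hS
  calc trimmedLoss n h ξ ≤ (1 / (n : ℝ)) * ∑ i ∈ I, ξ i ^ 2 := trimmedLoss_le_sum n h ξ I hI
    _ = (1 / (n : ℝ)) * ∑ i ∈ I, η i ^ 2 := by
        rw [sum_congr rfl fun i hi => by rw [hξη i (hIS hi)]]
    _ ≤ (1 / (n : ℝ)) * ∑ i, η i ^ 2 :=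
        mul_le_mul_of_nonneg_left
          (sum_le_sum_of_subset_of_nonneg (subset_univ I) fun i _ _ => sq_nonneg _)
          (by positivity)

lemma le_card_filter_of_ncard_setOf_not_le {α : Type*} [Fintype α] (p : α → Prop)
    [DecidablePred p] {h : ℕ} (hh : h ≤ Fintype.card α)
    (hbad : {a | ¬p a}.ncard ≤ Fintype.card α - h) :
    h ≤ (univ.filter p).card := by
  have hsplit := card_filter_add_card_filter_not (s := (univ : Finset α)) p
  rw [Set.ncard_eq_toFinset_card', Set.toFinset_ofPred] at hbad
  rw [card_univ] at hsplit
  omega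

theorem breakdown_bound_general {X Θ : Type*} (n h : ℕ) (hhn : h ≤ n)
    (x : Fin n → X) (y : Fin n → ℝ) (f : Θ → X → ℝ)
    (C : Θ → ℝ)
    (lam : ℝ) (hlam : 0 < lam) (θ₀ : Θ)
    (x' : Fin n → X) (y' : Fin n → ℝ)
    (hrepl : {i : Fin n | ¬(x' i = x i ∧ y' i = y i)}.ncard ≤ n - h)
    (θhat : Θ)
    (hmin : ∀ θ : Θ,
      (1 / 2) * trimmedLoss n h (fun i => y' i - f θhat (x' i)) + lam * C θhat ≤
        (1 / 2) * trimmedLoss n h (fun i => y' i - f θ (x' i)) + lam * C θ) :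
    C θhat ≤
      ((1 / (2 * (n : ℝ))) * ∑ i, (y i - f θ₀ (x i)) ^ 2 + lam * C θ₀) / lam := by
  classical
  have hclean := le_card_filter_of_ncard_setOf_not_le (fun i => x' i = x i ∧ y' i = y i)
    (by simpa using hhn) (by simpa using hrepl)
  have hθ₀ : trimmedLoss n h (fun i => y' i - f θ₀ (x' i)) ≤
      (1 / (n : ℝ)) * ∑ i, (y i - f θ₀ (x i)) ^ 2 := by
    refine trimmedLoss_le_sum_of_eqOn n h _ _ _ hclean fun i hi => ?_
    obtain ⟨hx, hy⟩ := (mem_filter.mp hi).2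
    simp only [hx, hy]
  have hθhat := trimmedLoss_nonneg n h (fun i => y' i - f θhat (x' i))
  have hhalf : (1 / (2 * (n : ℝ))) * ∑ i, (y i - f θ₀ (x i)) ^ 2 =
      (1 / 2) * ((1 / (n : ℝ)) * ∑ i, (y i - f θ₀ (x i)) ^ 2) := by ring
  rw [le_div_iff₀ hlam]
  linarith [hmin θ₀]

/-- Functional breakdown bound: a minimizer of the HOV-regularized trimmed loss on a dataset
contaminated in at most `n - h` places has regularizer value at most `M₀ / λ`. -/
theorem breakdown_bound {X Θ : Type*} (n h : ℕ) (hn : 0 < n) (hh1 : 1 ≤ h) (hhn : h ≤ n)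
    (x : Fin n → X) (y : Fin n → ℝ) (f : Θ → X → ℝ)
    (C : Θ → ℝ) (hC : ∀ θ, 0 ≤ C θ)
    (lam : ℝ) (hlam : 0 < lam) (θ₀ : Θ)
    (x' : Fin n → X) (y' : Fin n → ℝ)
    (hrepl : {i : Fin n | ¬(x' i = x i ∧ y' i = y i)}.ncard ≤ n - h)
    (θhat : Θ)
    (hmin : ∀ θ : Θ,
      (1 / 2) * trimmedLoss n h (fun i => y' i - f θhat (x' i)) + lam * C θhat ≤
        (1 / 2) * trimmedLoss n h (fun i => y' i - f θ (x' i)) + lam * C θ) :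
    C θhat ≤
      ((1 / (2 * (n : ℝ))) * ∑ i, (y i - f θ₀ (x i)) ^ 2 + lam * C θ₀) / lam :=
  breakdown_bound_general n h hhn x y f C lam hlam θ₀ x' y' hrepl θhat hmin
end
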